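/- Let k ≥ 1 and let T_{2,k} be the balanced binary tree with k levels (every non-leaf vertex has exactly two children, all leaves at the same distance k−1 from the root, so #V(T_{2,k}) = 2^k − 1). Then π(T_{2,k}) = (2^k + (-1)^{k-1})/3, the (k−1)-th Jacobsthal number, and moreover this minimum is attained by a set consisting only of leaves, i.e., π_leaf(T_{2,k}) = π(T_{2,k}). -/

import Mathlib

/-- The propagation closure: `PropReach G S v` means vertex `v` eventually receives the
information when the process starts from the set `S` on the graph `G`.  A vertex `w` can be
added whenever some vertex `v` already having the information is adjacent to `w` and every
neighbour of `v` other than `w` already has the information. -/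
inductive PropReach {V : Type*} (G : SimpleGraph V) (S : Set V) : V → Prop
  | base {v : V} (hv : v ∈ S) : PropReach G S v
  | step {v w : V} (hv : PropReach G S v) (hadj : G.Adj v w)
      (hall : ∀ x : V, G.Adj v x → x ≠ w → PropReach G S x) : PropReach G S w

/-- `S ↷ G` : the set `S` propagates to (all of) the graph `G`. -/
def Propagates {V : Type*} (G : SimpleGraph V) (S : Set V) : Prop :=
  ∀ v : V, PropReach G S v

/-- `π(G)`: the minimum cardinality of a set of vertices propagating to `G`. -/
noncomputable def propNum {V : Type*} (G : SimpleGraph V) : ℕ :=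
  sInf {n : ℕ | ∃ S : Set V, S.ncard = n ∧ Propagates G S}

/-- The balanced `m`-ary tree of depth `d`: vertices are words over an alphabet of
size `m` of length at most `d` (the root is the empty word), and each vertex `l` of
length `< d` is adjacent to its `m` children `x :: l`. -/
def BalancedTree (m d : ℕ) : SimpleGraph {l : List (Fin m) // l.length ≤ d} where
  Adj a b := (∃ x : Fin m, (a : List (Fin m)) = x :: (b : List (Fin m))) ∨
             (∃ x : Fin m, (b : List (Fin m)) = x :: (a : List (Fin m)))
  symm := ⟨fun a b h => h.symm⟩
  loopless := ⟨by
    rintro a (⟨x, hx⟩ | ⟨x, hx⟩) <;> simpa using congrArg List.length hx⟩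

/-!
The propagation rule is zero forcing. The set reached from `S` is the least superset of `S`
closed under forcing, and the complement of a fort (a nonempty set `F` such that no vertex
outside `F` has exactly one neighbour in `F`) is closed; so a propagating set meets every fort.

Both bounds come from an induction on the height `j` of a subtree, distinguishing three
situations at its root `u`. Upper bound: leaf sets that force the subtree with no help, that
force `u` and then the subtree once the parent of `u` is known, or that force the subtree once
`u` and its parent are known; glueing such sets for the two children shows that sizes
`(J(j+2)+1)/2`, `J(j+1)` and `(J(j+2)-1)/2` suffice. Lower bound: three matching families of
forts inside the subtree, glued at `u` from forts of the children, force a starting set that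
meets all forts of a family to have at least that many vertices in the subtree. Each case
reduces to the recurrence `J(n+2) = J(n+1) + 2 J(n)`.
-/

open Set

section Forcing

variable {V : Type*} {G : SimpleGraph V} {S T F : Set V}

def IsForcingClosed (G : SimpleGraph V) (T : Set V) : Prop :=
  ∀ ⦃v w⦄, v ∈ T → G.Adj v w → (∀ x, G.Adj v x → x ≠ w → x ∈ T) → w ∈ T

theorem PropReach.mem_of_isForcingClosed (hT : IsForcingClosed G T) (hST : S ⊆ T) {v : V}
    (hv : PropReach G S v) : v ∈ T := by
  induction hv with
  | base hv => exact hST hv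
  | step _ hadj _ ih ihall => exact hT ih hadj ihall

theorem isForcingClosed_setOf_propReach (G : SimpleGraph V) (S : Set V) :
    IsForcingClosed G {v | PropReach G S v} :=
  fun _ _ hv hadj hall => PropReach.step hv hadj hall

theorem propagates_iff_forall_isForcingClosed :
    Propagates G S ↔ ∀ T, IsForcingClosed G T → S ⊆ T → T = univ := by
  refine ⟨fun hS T hT hST => eq_univ_of_forall fun v => (hS v).mem_of_isForcingClosed hT hST,
    fun h => eq_univ_iff_forall.1 (h _ (isForcingClosed_setOf_propReach G S) fun _ => .base)⟩

def IsFortOn (G : SimpleGraph V) (A F : Set V) : Prop :=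
  F.Nonempty ∧ ∀ v ∈ A, v ∉ F → ¬∃! w, w ∈ F ∧ G.Adj v w

theorem IsFortOn.isForcingClosed_compl (hF : IsFortOn G univ F) : IsForcingClosed G Fᶜ := by
  intro v w hv hadj hall hw
  refine hF.2 v trivial hv ⟨w, ⟨hw, hadj⟩, fun x ⟨hx, hvx⟩ => ?_⟩
  by_contra hxw
  exact hall x hvx hxw hx

def Meets (S : Set V) (𝓕 : Set (Set V)) : Prop := ∀ F ∈ 𝓕, ¬Disjoint S F

theorem Meets.mono {𝓕 𝓖 : Set (Set V)} (h : Meets S 𝓕) (h𝓖 : 𝓖 ⊆ 𝓕) : Meets S 𝓖 :=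
  fun F hF => h F (h𝓖 hF)

theorem Propagates.meets (hS : Propagates G S) : Meets S {F | IsFortOn G univ F} := by
  intro F hF hSF
  have hcompl := propagates_iff_forall_isForcingClosed.1 hS _ hF.isForcingClosed_compl
    hSF.subset_compl_right
  obtain ⟨v, hv⟩ := hF.1
  exact (hcompl ▸ mem_univ v : v ∈ Fᶜ) hv

end Forcing

def jacobsthal : ℕ → ℕ
  | 0 => 0
  | 1 => 1
  | n + 2 => jacobsthal (n + 1) + 2 * jacobsthal n

theorem jacobsthal_add_two (n : ℕ) :
    jacobsthal (n + 2) = jacobsthal (n + 1) + 2 * jacobsthal n := rfl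

theorem jacobsthal_succ (n : ℕ) :
    (jacobsthal (n + 1) : ℤ) = 2 * jacobsthal n + (-1) ^ n := by
  induction n with
  | zero => rfl
  | succ n ih =>
    rw [jacobsthal_add_two]
    push_cast
    rw [ih, pow_succ]
    ring

theorem jacobsthal_succ_le (n : ℕ) : jacobsthal (n + 1) ≤ 2 * jacobsthal n + 1 := by
  have h := jacobsthal_succ n
  rcases neg_one_pow_eq_or ℤ n with h' | h' <;> omega

theorem three_mul_jacobsthal (n : ℕ) : 3 * (jacobsthal n : ℤ) = 2 ^ n - (-1) ^ n := by
  induction n with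
  | zero => rfl
  | succ n ih =>
    rw [jacobsthal_succ, pow_succ, pow_succ]
    linear_combination 2 * ih

namespace BalancedTree

abbrev Vertex (m D : ℕ) := {l : List (Fin m) // l.length ≤ D}

variable {m D : ℕ}

instance : Finite (Vertex m D) := (List.finite_length_le (Fin m) D).to_subtype

def subtree (u : Vertex m D) : Set (Vertex m D) := {v | u.1 <:+ v.1}

variable {u c c₀ c₁ v w : Vertex m D} {x x₀ x₁ : Fin m}

theorem mem_subtree_self (u : Vertex m D) : u ∈ subtree u := List.suffix_refl _

theorem subtree_subset_of_child (hc : c.1 = x :: u.1) : subtree c ⊆ subtree u :=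
  fun _ hv => (hc ▸ List.suffix_cons x u.1).trans hv

theorem notMem_subtree_child (hc : c.1 = x :: u.1) : u ∉ subtree c := fun h => by
  simpa [hc] using h.length_le

theorem disjoint_subtree_children (hc₀ : c₀.1 = x₀ :: u.1) (hc₁ : c₁.1 = x₁ :: u.1)
    (hx : x₀ ≠ x₁) : Disjoint (subtree c₀) (subtree c₁) := by
  refine disjoint_left.2 fun v h₀ h₁ => hx ?_
  have h := (List.suffix_of_suffix_length_le h₀ h₁ (by simp [hc₀, hc₁])).eq_of_length
    (by simp [hc₀, hc₁])
  rw [hc₀, hc₁] at h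
  exact List.head_eq_of_cons_eq h

theorem subtree_eq_singleton (hu : u.1.length = D) : subtree u = {u} := by
  refine eq_singleton_iff_unique_mem.2 ⟨mem_subtree_self u, fun v hv => ?_⟩
  exact (Subtype.ext (hv.eq_of_length (by have := v.2; have := hv.length_le; omega))).symm

theorem eq_of_adj_of_mem_subtree_child (hc : c.1 = x :: u.1) (h : (BalancedTree m D).Adj v w)
    (hw : w ∈ subtree c) (hv : v ∉ subtree c) : v = u ∧ w = c := by
  rcases h with ⟨y, hy⟩ | ⟨y, hy⟩
  · exact absurd (hw.trans (hy ▸ List.suffix_cons y w.1)) hv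
  · have hw' : c.1 <:+ y :: v.1 := hy ▸ hw
    rcases List.suffix_cons_iff.1 hw' with hcv | hcv
    · refine ⟨Subtype.ext ?_, Subtype.ext (hy.trans hcv.symm)⟩
      rw [hc] at hcv
      exact (List.cons.inj hcv).2.symm
    · exact absurd hcv hv

theorem subtree_eq_insert {u c₀ c₁ : Vertex 2 D} (hc₀ : c₀.1 = 0 :: u.1)
    (hc₁ : c₁.1 = 1 :: u.1) : subtree u = insert u (subtree c₀ ∪ subtree c₁) := by
  refine Subset.antisymm (fun v ⟨t, ht⟩ => ?_) (insert_subset (mem_subtree_self u)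
    (union_subset (subtree_subset_of_child hc₀) (subtree_subset_of_child hc₁)))
  rcases t.eq_nil_or_concat with rfl | ⟨t, y, rfl⟩
  · exact Or.inl (Subtype.ext ht.symm)
  · have hy : y :: u.1 <:+ v.1 := ⟨t, by simpa using ht⟩
    obtain rfl | rfl : y = 0 ∨ y = 1 := by omega
    exacts [Or.inr (Or.inl (show c₀.1 <:+ v.1 from hc₀ ▸ hy)),
      Or.inr (Or.inr (show c₁.1 <:+ v.1 from hc₁ ▸ hy))]

theorem add_ncard_inter_subtree_children_le {u c₀ c₁ : Vertex 2 D} (hc₀ : c₀.1 = 0 :: u.1)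
    (hc₁ : c₁.1 = 1 :: u.1) (S : Set (Vertex 2 D)) :
    (S ∩ subtree c₀).ncard + (S ∩ subtree c₁).ncard ≤ (S ∩ subtree u).ncard ∧
      (u ∈ S → (S ∩ subtree c₀).ncard + (S ∩ subtree c₁).ncard + 1 ≤ (S ∩ subtree u).ncard) := by
  have hu : u ∉ subtree c₀ ∪ subtree c₁ := by
    rintro (h | h)
    exacts [notMem_subtree_child hc₀ h, notMem_subtree_child hc₁ h]
  have hchildren : (S ∩ (subtree c₀ ∪ subtree c₁)).ncard =
      (S ∩ subtree c₀).ncard + (S ∩ subtree c₁).ncard := by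
    rw [inter_union_distrib_left]
    exact ncard_union_eq ((disjoint_subtree_children hc₀ hc₁ (by decide)).mono
      inter_subset_right inter_subset_right)
  rw [subtree_eq_insert hc₀ hc₁]
  by_cases huS : u ∈ S
  · rw [inter_insert_of_mem huS, ncard_insert_of_notMem fun h => hu h.2, hchildren]
    omega
  · rw [inter_insert_of_notMem huS, hchildren]
    exact ⟨le_rfl, fun h => absurd h huS⟩

theorem exists_children {u : Vertex 2 D} (hu : u.1.length < D) :
    ∃ c₀ c₁ : Vertex 2 D, c₀.1 = 0 :: u.1 ∧ c₁.1 = 1 :: u.1 :=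
  ⟨⟨0 :: u.1, hu⟩, ⟨1 :: u.1, hu⟩, rfl, rfl⟩

def root : Vertex m D := ⟨[], Nat.zero_le D⟩

theorem subtree_root : subtree (root : Vertex m D) = univ :=
  eq_univ_of_forall fun _ => List.nil_suffix

/-! ### Leaf sets forcing a subtree -/

variable {S₀ S₁ T : Set (Vertex m D)}

/-- The parent of `u`, if `u` is not the root, lies in `T`. -/
def ParentMem (u : Vertex m D) (T : Set (Vertex m D)) : Prop :=
  ∀ w, (BalancedTree m D).Adj u w → w ∉ subtree u → w ∈ T

theorem parentMem_of_child (hc : c.1 = x :: u.1) (hu : u ∈ T) : ParentMem c T :=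
  fun _ hadj hw => (eq_of_adj_of_mem_subtree_child hc hadj.symm (mem_subtree_self c) hw).1 ▸ hu

theorem IsForcingClosed.mem_of_subtree_child_subset (hT : IsForcingClosed (BalancedTree m D) T)
    (hc : c.1 = x :: u.1) (hsub : subtree c ⊆ T) : u ∈ T :=
  hT (hsub (mem_subtree_self c)) (Or.inl ⟨x, hc⟩) fun w hadj hwu => by
    by_contra hwT
    exact hwu (eq_of_adj_of_mem_subtree_child hc hadj.symm (mem_subtree_self c)
      fun hw => hwT (hsub hw)).1

theorem IsForcingClosed.mem_child {T : Set (Vertex 2 D)} {u c₀ c₁ : Vertex 2 D}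
    (hT : IsForcingClosed (BalancedTree 2 D) T) (hc₀ : c₀.1 = 0 :: u.1)
    (hc₁ : c₁.1 = 1 :: u.1) (hu : u ∈ T) (hpu : ParentMem u T) (h₀ : c₀ ∈ T) : c₁ ∈ T :=
  hT hu (Or.inr ⟨1, hc₁⟩) fun w hadj hw₁ => by
    rcases hadj with ⟨y, hy⟩ | ⟨y, hy⟩
    · exact hpu w (Or.inl ⟨y, hy⟩) fun h => by simpa [hy] using h.length_le
    · obtain rfl | rfl : y = 0 ∨ y = 1 := by omega
      · exact (Subtype.ext (hy.trans hc₀.symm) : w = c₀) ▸ h₀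
      · exact absurd (Subtype.ext (hy.trans hc₁.symm)) hw₁

def ForcesSubtree (u : Vertex m D) (S : Set (Vertex m D)) : Prop :=
  ∀ T, IsForcingClosed (BalancedTree m D) T → S ⊆ T → subtree u ⊆ T

def ForcesRootAndSubtreeWithParent (u : Vertex m D) (S : Set (Vertex m D)) : Prop :=
  ∀ T, IsForcingClosed (BalancedTree m D) T → S ⊆ T → u ∈ T ∧ (ParentMem u T → subtree u ⊆ T)

def ForcesSubtreeWithRootAndParent (u : Vertex m D) (S : Set (Vertex m D)) : Prop :=
  ∀ T, IsForcingClosed (BalancedTree m D) T → S ⊆ T → u ∈ T → ParentMem u T → subtree u ⊆ T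

section Leaf

variable (hu : u.1.length = D)
include hu

theorem forcesSubtree_singleton : ForcesSubtree u {u} :=
  fun _ _ hS => subtree_eq_singleton hu ▸ hS

theorem forcesRootAndSubtreeWithParent_singleton : ForcesRootAndSubtreeWithParent u {u} :=
  fun _ _ hS => ⟨hS rfl, fun _ => subtree_eq_singleton hu ▸ hS⟩

theorem forcesSubtreeWithRootAndParent_empty : ForcesSubtreeWithRootAndParent u ∅ :=
  fun _ _ _ hu' _ => subtree_eq_singleton hu ▸ singleton_subset_iff.2 hu'

end Leaf

section Children

variable {u c₀ c₁ : Vertex 2 D} {S₀ S₁ : Set (Vertex 2 D)}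
  (hc₀ : c₀.1 = 0 :: u.1) (hc₁ : c₁.1 = 1 :: u.1)
include hc₀ hc₁

theorem ForcesSubtree.union (h₀ : ForcesSubtree c₀ S₀)
    (h₁ : ForcesRootAndSubtreeWithParent c₁ S₁) : ForcesSubtree u (S₀ ∪ S₁) := by
  intro T hT hS
  have hsub₀ := h₀ T hT (subset_union_left.trans hS)
  have hu := IsForcingClosed.mem_of_subtree_child_subset hT hc₀ hsub₀
  have hsub₁ := (h₁ T hT (subset_union_right.trans hS)).2 (parentMem_of_child hc₁ hu)
  rw [subtree_eq_insert hc₀ hc₁]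
  exact insert_subset hu (union_subset hsub₀ hsub₁)

theorem ForcesSubtree.union_forcesRootAndSubtreeWithParent (h₀ : ForcesSubtree c₀ S₀)
    (h₁ : ForcesSubtreeWithRootAndParent c₁ S₁) :
    ForcesRootAndSubtreeWithParent u (S₀ ∪ S₁) := by
  intro T hT hS
  have hsub₀ := h₀ T hT (subset_union_left.trans hS)
  have hu := IsForcingClosed.mem_of_subtree_child_subset hT hc₀ hsub₀
  refine ⟨hu, fun hpu => ?_⟩
  have hc₁T := IsForcingClosed.mem_child hT hc₀ hc₁ hu hpu (hsub₀ (mem_subtree_self c₀))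
  have hsub₁ := h₁ T hT (subset_union_right.trans hS) hc₁T (parentMem_of_child hc₁ hu)
  rw [subtree_eq_insert hc₀ hc₁]
  exact insert_subset hu (union_subset hsub₀ hsub₁)

theorem ForcesRootAndSubtreeWithParent.union (h₀ : ForcesRootAndSubtreeWithParent c₀ S₀)
    (h₁ : ForcesSubtreeWithRootAndParent c₁ S₁) :
    ForcesSubtreeWithRootAndParent u (S₀ ∪ S₁) := by
  intro T hT hS hu hpu
  obtain ⟨hc₀T, hsub₀⟩ := h₀ T hT (subset_union_left.trans hS)
  have hc₁T := IsForcingClosed.mem_child hT hc₀ hc₁ hu hpu hc₀T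
  have hsub₁ := h₁ T hT (subset_union_right.trans hS) hc₁T (parentMem_of_child hc₁ hu)
  rw [subtree_eq_insert hc₀ hc₁]
  exact insert_subset hu (union_subset (hsub₀ (parentMem_of_child hc₀ hu)) hsub₁)

end Children

def IsLeafSetBelow (u : Vertex m D) (S : Set (Vertex m D)) : Prop :=
  S ⊆ subtree u ∧ ∀ v ∈ S, v.1.length = D

theorem IsLeafSetBelow.union (hc₀ : c₀.1 = x₀ :: u.1) (hc₁ : c₁.1 = x₁ :: u.1)
    (h₀ : IsLeafSetBelow c₀ S₀) (h₁ : IsLeafSetBelow c₁ S₁) : IsLeafSetBelow u (S₀ ∪ S₁) :=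
  ⟨union_subset (h₀.1.trans (subtree_subset_of_child hc₀))
    (h₁.1.trans (subtree_subset_of_child hc₁)), fun v hv => hv.elim (h₀.2 v) (h₁.2 v)⟩

theorem IsLeafSetBelow.ncard_union (hc₀ : c₀.1 = x₀ :: u.1) (hc₁ : c₁.1 = x₁ :: u.1)
    (hx : x₀ ≠ x₁) (h₀ : IsLeafSetBelow c₀ S₀) (h₁ : IsLeafSetBelow c₁ S₁) :
    (S₀ ∪ S₁).ncard = S₀.ncard + S₁.ncard :=
  ncard_union_eq ((disjoint_subtree_children hc₀ hc₁ hx).mono h₀.1 h₁.1)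

theorem exists_isLeafSetBelow {j : ℕ} {u : Vertex 2 D} (hu : u.1.length + j = D) :
    (∃ S, IsLeafSetBelow u S ∧ 2 * S.ncard = jacobsthal (j + 2) + 1 ∧ ForcesSubtree u S) ∧
    (∃ S, IsLeafSetBelow u S ∧ S.ncard = jacobsthal (j + 1) ∧
      ForcesRootAndSubtreeWithParent u S) ∧
    (∃ S, IsLeafSetBelow u S ∧ 2 * S.ncard + 1 = jacobsthal (j + 2) ∧
      ForcesSubtreeWithRootAndParent u S) := by
  induction j generalizing u with
  | zero =>
    have hleaf : IsLeafSetBelow u {u} :=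
      ⟨singleton_subset_iff.2 (mem_subtree_self u), fun v hv => hv ▸ hu⟩
    exact ⟨⟨{u}, hleaf, by simp [jacobsthal], forcesSubtree_singleton hu⟩,
      ⟨{u}, hleaf, by simp [jacobsthal], forcesRootAndSubtreeWithParent_singleton hu⟩,
      ⟨∅, ⟨empty_subset _, fun _ => False.elim⟩, by simp [jacobsthal],
        forcesSubtreeWithRootAndParent_empty hu⟩⟩
  | succ j ih =>
    obtain ⟨c₀, c₁, hc₀, hc₁⟩ := exists_children (u := u) (by omega)
    obtain ⟨⟨W₀, hW₀, hW₀card, hW₀forces⟩, ⟨C₀, hC₀, hC₀card, hC₀forces⟩, -⟩ :=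
      ih (u := c₀) (by simp [hc₀]; omega)
    obtain ⟨-, ⟨C₁, hC₁, hC₁card, hC₁forces⟩, ⟨B₁, hB₁, hB₁card, hB₁forces⟩⟩ :=
      ih (u := c₁) (by simp [hc₁]; omega)
    rw [jacobsthal_add_two (j + 1), show j + 1 + 1 = j + 2 from rfl]
    refine ⟨⟨W₀ ∪ C₁, hW₀.union hc₀ hc₁ hC₁, ?_, hW₀forces.union hc₀ hc₁ hC₁forces⟩,
      ⟨W₀ ∪ B₁, hW₀.union hc₀ hc₁ hB₁, ?_,
        hW₀forces.union_forcesRootAndSubtreeWithParent hc₀ hc₁ hB₁forces⟩,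
      ⟨C₀ ∪ B₁, hC₀.union hc₀ hc₁ hB₁, ?_, hC₀forces.union hc₀ hc₁ hB₁forces⟩⟩
    · rw [hW₀.ncard_union hc₀ hc₁ (by decide) hC₁]; omega
    · rw [hW₀.ncard_union hc₀ hc₁ (by decide) hB₁]; omega
    · rw [hC₀.ncard_union hc₀ hc₁ (by decide) hB₁]; omega

theorem exists_propagating_leafSet : ∃ S : Set (Vertex 2 D), (∀ v ∈ S, v.1.length = D) ∧
    S.ncard = jacobsthal (D + 1) ∧ Propagates (BalancedTree 2 D) S := by
  obtain ⟨S, ⟨-, hleaf⟩, hcard, hforces⟩ :=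
    (exists_isLeafSetBelow (u := (root : Vertex 2 D)) (j := D) (by simp [root])).2.1
  refine ⟨S, hleaf, hcard, propagates_iff_forall_isForcingClosed.2 fun T hT hST => ?_⟩
  have h := (hforces T hT hST).2 fun w _ hw => (hw (subtree_root ▸ mem_univ w)).elim
  rwa [subtree_root, univ_subset_iff] at h

/-! ### Forts inside a subtree -/

def looseForts (u : Vertex m D) : Set (Set (Vertex m D)) :=
  {F | F ⊆ subtree u ∧ IsFortOn (BalancedTree m D) (subtree u \ {u}) F}

def subtreeForts (u : Vertex m D) : Set (Set (Vertex m D)) :=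
  {F | F ⊆ subtree u ∧ IsFortOn (BalancedTree m D) (subtree u) F}

def closedForts (u : Vertex m D) : Set (Set (Vertex m D)) :=
  {F | F ∈ subtreeForts u ∧ u ∉ F}

variable {F F₀ F₁ : Set (Vertex m D)}

theorem closedForts_subset_subtreeForts : closedForts u ⊆ subtreeForts u := fun _ h => h.1

theorem subtreeForts_subset_looseForts : subtreeForts u ⊆ looseForts u :=
  fun _ ⟨hF, hne, hcond⟩ => ⟨hF, hne, fun v hv => hcond v hv.1⟩

/-- Below a child `c`, the vertices other than `c` only see `F'` through `F' ∩ subtree c`. -/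
theorem not_existsUnique_of_mem_subtree_child {F' : Set (Vertex m D)} (hc : c.1 = x :: u.1)
    (hv : v ∈ subtree c) (hvc : v ≠ c) (hFF' : F ⊆ F') (hF' : ∀ w ∈ F', w ∈ subtree c → w ∈ F)
    (h : ¬∃! w, w ∈ F ∧ (BalancedTree m D).Adj v w) :
    ¬∃! w, w ∈ F' ∧ (BalancedTree m D).Adj v w := by
  rintro ⟨w, ⟨hw, hadj⟩, huniq⟩
  have hwc : w ∈ subtree c := by
    by_contra hwc
    exact hvc (eq_of_adj_of_mem_subtree_child hc hadj.symm hv hwc).2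
  exact h ⟨w, ⟨hF' w hw hwc, hadj⟩, fun y hy => huniq y ⟨hFF' hy.1, hy.2⟩⟩

theorem closedForts_subset_of_child (hc : c.1 = x :: u.1) : closedForts c ⊆ closedForts u := by
  rintro F ⟨⟨hF, hne, hcond⟩, hcF⟩
  refine ⟨⟨hF.trans (subtree_subset_of_child hc), hne, fun v _ hvF => ?_⟩,
    fun huF => notMem_subtree_child hc (hF huF)⟩
  by_cases hv : v ∈ subtree c
  · exact hcond v hv hvF
  · rintro ⟨w, ⟨hw, hadj⟩, -⟩
    exact hcF ((eq_of_adj_of_mem_subtree_child hc hadj (hF hw) hv).2 ▸ hw)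

theorem subtreeForts_subset_looseForts_of_child (hc : c.1 = x :: u.1) :
    subtreeForts c ⊆ looseForts u := by
  rintro F ⟨hF, hne, hcond⟩
  refine ⟨hF.trans (subtree_subset_of_child hc), hne, fun v ⟨_, hvu⟩ hvF => ?_⟩
  by_cases hv : v ∈ subtree c
  · exact hcond v hv hvF
  · rintro ⟨w, ⟨hw, hadj⟩, -⟩
    exact hvu (eq_of_adj_of_mem_subtree_child hc hadj (hF hw) hv).1

theorem mem_closedForts_or_of_mem_looseForts (h : F ∈ looseForts u) :
    F ∈ closedForts u ∨ u ∈ F ∨ ∃ w ∈ F, (BalancedTree m D).Adj u w := by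
  obtain ⟨hF, hne, hcond⟩ := h
  by_cases huF : u ∈ F
  · exact Or.inr (Or.inl huF)
  by_cases hadj : ∃ w ∈ F, (BalancedTree m D).Adj u w
  · exact Or.inr (Or.inr hadj)
  refine Or.inl ⟨⟨hF, hne, fun v hv hvF => ?_⟩, huF⟩
  by_cases hvu : v = u
  · rintro ⟨w, hw, -⟩
    exact hadj ⟨w, hw.1, hvu ▸ hw.2⟩
  · exact hcond v ⟨hv, hvu⟩ hvF

theorem not_existsUnique_insert_union (hc₀ : c₀.1 = x₀ :: u.1) (hc₁ : c₁.1 = x₁ :: u.1)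
    (hx : x₀ ≠ x₁) (h₀ : F₀ ∈ looseForts c₀)
    (ha₀ : c₀ ∈ F₀ ∨ ∃ w ∈ F₀, (BalancedTree m D).Adj c₀ w) (hF₁ : F₁ ⊆ subtree c₁)
    (hv : v ∈ subtree c₀) (hvF : v ∉ insert u (F₀ ∪ F₁)) :
    ¬∃! w, w ∈ insert u (F₀ ∪ F₁) ∧ (BalancedTree m D).Adj v w := by
  obtain ⟨hF₀, -, hcond₀⟩ := h₀
  by_cases hvc : v = c₀
  · rw [hvc] at hvF ⊢
    obtain ⟨w, hw, hadj⟩ := ha₀.resolve_left fun h => hvF (Or.inr (Or.inl h))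
    intro h
    have huw : u = w := h.unique ⟨Or.inl rfl, Or.inl ⟨x₀, hc₀⟩⟩ ⟨Or.inr (Or.inl hw), hadj⟩
    exact notMem_subtree_child hc₀ (huw ▸ hF₀ hw)
  · refine not_existsUnique_of_mem_subtree_child hc₀ hv hvc
      (subset_union_left.trans (subset_insert _ _)) (fun w hw hwc => ?_)
      (hcond₀ v ⟨hv, hvc⟩ fun h => hvF (Or.inr (Or.inl h)))
    rcases hw with rfl | hw | hw
    · exact absurd hwc (notMem_subtree_child hc₀)
    · exact hw
    · exact absurd (hF₁ hw) (disjoint_left.1 (disjoint_subtree_children hc₀ hc₁ hx) hwc)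

section Children

variable {u c₀ c₁ : Vertex 2 D} {S F₀ F₁ : Set (Vertex 2 D)}
  (hc₀ : c₀.1 = 0 :: u.1) (hc₁ : c₁.1 = 1 :: u.1)
include hc₀ hc₁

theorem union_mem_closedForts (h₀ : F₀ ∈ subtreeForts c₀) (h₁ : F₁ ∈ subtreeForts c₁)
    (hc₀F : c₀ ∈ F₀) (hc₁F : c₁ ∈ F₁) : F₀ ∪ F₁ ∈ closedForts u := by
  obtain ⟨hF₀, -, hcond₀⟩ := h₀
  obtain ⟨hF₁, -, hcond₁⟩ := h₁
  have hdisj := disjoint_subtree_children hc₀ hc₁ (by decide)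
  refine ⟨⟨union_subset (hF₀.trans (subtree_subset_of_child hc₀))
      (hF₁.trans (subtree_subset_of_child hc₁)), ⟨c₀, Or.inl hc₀F⟩, fun v hv hvF => ?_⟩,
    fun huF => huF.elim (fun h => notMem_subtree_child hc₀ (hF₀ h))
      (fun h => notMem_subtree_child hc₁ (hF₁ h))⟩
  rw [subtree_eq_insert hc₀ hc₁] at hv
  rcases hv with rfl | hv | hv
  · exact fun h => hdisj.ne_of_mem (mem_subtree_self c₀) (mem_subtree_self c₁)
      (h.unique ⟨Or.inl hc₀F, Or.inr ⟨0, hc₀⟩⟩ ⟨Or.inr hc₁F, Or.inr ⟨1, hc₁⟩⟩)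
  · refine not_existsUnique_of_mem_subtree_child hc₀ hv (fun h => hvF (Or.inl (h ▸ hc₀F)))
      subset_union_left (fun w hw hwc => hw.resolve_right fun hw₁ =>
        disjoint_left.1 hdisj hwc (hF₁ hw₁)) (hcond₀ v hv fun h => hvF (Or.inl h))
  · refine not_existsUnique_of_mem_subtree_child hc₁ hv (fun h => hvF (Or.inr (h ▸ hc₁F)))
      subset_union_right (fun w hw hwc => hw.resolve_left fun hw₀ =>
        disjoint_right.1 hdisj hwc (hF₀ hw₀)) (hcond₁ v hv fun h => hvF (Or.inr h))

theorem insert_union_mem_subtreeForts (h₀ : F₀ ∈ looseForts c₀) (h₁ : F₁ ∈ looseForts c₁)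
    (ha₀ : c₀ ∈ F₀ ∨ ∃ w ∈ F₀, (BalancedTree 2 D).Adj c₀ w)
    (ha₁ : c₁ ∈ F₁ ∨ ∃ w ∈ F₁, (BalancedTree 2 D).Adj c₁ w) :
    insert u (F₀ ∪ F₁) ∈ subtreeForts u := by
  refine ⟨insert_subset (mem_subtree_self u) (union_subset
    (h₀.1.trans (subtree_subset_of_child hc₀)) (h₁.1.trans (subtree_subset_of_child hc₁))),
    ⟨u, mem_insert _ _⟩, fun v hv hvF => ?_⟩
  rw [subtree_eq_insert hc₀ hc₁] at hv
  rcases hv with rfl | hv | hv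
  · exact absurd (mem_insert _ _) hvF
  · exact not_existsUnique_insert_union hc₀ hc₁ (by decide) h₀ ha₀ h₁.1 hv hvF
  · rw [union_comm] at hvF ⊢
    exact not_existsUnique_insert_union hc₁ hc₀ (by decide) h₁ ha₁ h₀.1 hv hvF

theorem Meets.subtreeForts_or (h : Meets S (closedForts u)) :
    Meets S (subtreeForts c₀) ∨ Meets S (subtreeForts c₁) := by
  by_contra! hcon
  simp only [Meets, not_forall, not_not] at hcon
  obtain ⟨⟨F₀, hF₀, hS₀⟩, ⟨F₁, hF₁, hS₁⟩⟩ := hcon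
  by_cases hc₀F : c₀ ∈ F₀
  · by_cases hc₁F : c₁ ∈ F₁
    · exact h _ (union_mem_closedForts hc₀ hc₁ hF₀ hF₁ hc₀F hc₁F)
        (disjoint_union_right.2 ⟨hS₀, hS₁⟩)
    · exact h _ (closedForts_subset_of_child hc₁ ⟨hF₁, hc₁F⟩) hS₁
  · exact h _ (closedForts_subset_of_child hc₀ ⟨hF₀, hc₀F⟩) hS₀

theorem Meets.mem_or_looseForts (h : Meets S (subtreeForts u)) :
    u ∈ S ∨ Meets S (looseForts c₀) ∨ Meets S (looseForts c₁) := by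
  by_contra! hcon
  simp only [Meets, not_forall, not_not] at hcon
  obtain ⟨huS, ⟨F₀, hF₀, hS₀⟩, ⟨F₁, hF₁, hS₁⟩⟩ := hcon
  have hclosed := h.mono closedForts_subset_subtreeForts
  rcases mem_closedForts_or_of_mem_looseForts hF₀ with hF₀' | ha₀
  · exact hclosed _ (closedForts_subset_of_child hc₀ hF₀') hS₀
  rcases mem_closedForts_or_of_mem_looseForts hF₁ with hF₁' | ha₁
  · exact hclosed _ (closedForts_subset_of_child hc₁ hF₁') hS₁
  exact h _ (insert_union_mem_subtreeForts hc₀ hc₁ hF₀ hF₁ ha₀ ha₁)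
    (disjoint_insert_right.2 ⟨huS, disjoint_union_right.2 ⟨hS₀, hS₁⟩⟩)

end Children

/-- The bounds `(J(j+2)-1)/2`, `J(j+1)` and `(J(j+2)+1)/2`, cleared of denominators. -/
def LowerBounds (S : Set (Vertex 2 D)) (j : ℕ) (u : Vertex 2 D) : Prop :=
  (Meets S (closedForts u) → jacobsthal (j + 2) ≤ 2 * (S ∩ subtree u).ncard + 1) ∧
  (Meets S (subtreeForts u) → jacobsthal (j + 1) ≤ (S ∩ subtree u).ncard) ∧
  (Meets S (looseForts u) → jacobsthal (j + 2) + 1 ≤ 2 * (S ∩ subtree u).ncard)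

theorem lowerBounds_zero {u : Vertex 2 D} (hu : u.1.length = D) (S : Set (Vertex 2 D)) :
    LowerBounds S 0 u := by
  have hsubtree : Meets S (subtreeForts u) → 1 ≤ (S ∩ subtree u).ncard := fun h => by
    have huS : u ∈ S := by
      simpa using h {u} ⟨(subtree_eq_singleton hu).ge, singleton_nonempty u,
        fun v hv hvu => (hvu (subtree_eq_singleton hu ▸ hv)).elim⟩
    rw [subtree_eq_singleton hu, inter_singleton_of_mem huS, ncard_singleton]
  refine ⟨fun _ => by simp [jacobsthal], hsubtree, fun h => ?_⟩
  have := hsubtree (h.mono subtreeForts_subset_looseForts)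
  simp only [jacobsthal]
  omega

theorem LowerBounds.succ {j : ℕ} {u c₀ c₁ : Vertex 2 D} {S : Set (Vertex 2 D)}
    (hc₀ : c₀.1 = 0 :: u.1) (hc₁ : c₁.1 = 1 :: u.1) (h₀ : LowerBounds S j c₀)
    (h₁ : LowerBounds S j c₁) : LowerBounds S (j + 1) u := by
  obtain ⟨hsplit, hsplit'⟩ := add_ncard_inter_subtree_children_le hc₀ hc₁ S
  have hJ := jacobsthal_add_two (j + 1)
  have hJ' := jacobsthal_succ_le (j + 1)
  unfold LowerBounds
  rw [show j + 1 + 1 = j + 2 from rfl] at hJ hJ' ⊢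
  refine ⟨fun h => ?_, fun h => ?_, fun h => ?_⟩
  · have a₀ := h₀.1 (Meets.mono h (closedForts_subset_of_child hc₀))
    have a₁ := h₁.1 (Meets.mono h (closedForts_subset_of_child hc₁))
    rcases Meets.subtreeForts_or hc₀ hc₁ h with h' | h'
    · have := h₀.2.1 h'; omega
    · have := h₁.2.1 h'; omega
  · have hclosed := Meets.mono h closedForts_subset_subtreeForts
    have a₀ := h₀.1 (Meets.mono hclosed (closedForts_subset_of_child hc₀))
    have a₁ := h₁.1 (Meets.mono hclosed (closedForts_subset_of_child hc₁))
    rcases Meets.mem_or_looseForts hc₀ hc₁ h with huS | h' | h'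
    · have := hsplit' huS; omega
    · have := h₀.2.2 h'; omega
    · have := h₁.2.2 h'; omega
  · have a₀ := h₀.2.1 (Meets.mono h (subtreeForts_subset_looseForts_of_child hc₀))
    have a₁ := h₁.2.1 (Meets.mono h (subtreeForts_subset_looseForts_of_child hc₁))
    rcases Meets.mem_or_looseForts hc₀ hc₁ (Meets.mono h subtreeForts_subset_looseForts)
      with huS | h' | h'
    · have := hsplit' huS; omega
    · have := h₀.2.2 h'; omega
    · have := h₁.2.2 h'; omega

theorem lowerBounds {j : ℕ} {u : Vertex 2 D} (S : Set (Vertex 2 D)) (hu : u.1.length + j = D) :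
    LowerBounds S j u := by
  induction j generalizing u with
  | zero => exact lowerBounds_zero hu S
  | succ j ih =>
    obtain ⟨c₀, c₁, hc₀, hc₁⟩ := exists_children (u := u) (by omega)
    exact (ih (by simp [hc₀]; omega)).succ hc₀ hc₁ (ih (by simp [hc₁]; omega))

theorem jacobsthal_le_ncard_of_propagates {S : Set (Vertex 2 D)}
    (hS : Propagates (BalancedTree 2 D) S) : jacobsthal (D + 1) ≤ S.ncard := by
  have h := (lowerBounds S (u := root) (j := D) (by simp [root])).2.1
    (hS.meets.mono fun F ⟨_, hF⟩ => by rwa [subtree_root] at hF)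
  rwa [subtree_root, inter_univ] at h

end BalancedTree

/-- For `k ≥ 1`, the balanced binary tree with `k` levels (depth `k - 1`,
`2^k - 1` vertices) satisfies `π(T_{2,k}) = (2^k + (-1)^(k-1))/3` (the Jacobsthal number),
and the minimum is attained by sets consisting only of leaves (words of length `k - 1`). -/
theorem propNum_balancedBinaryTree (k : ℕ) (hk : 1 ≤ k) :
    (3 : ℤ) * (propNum (BalancedTree 2 (k - 1)) : ℤ) = 2 ^ k + (-1) ^ (k - 1) ∧
    sInf {n : ℕ | ∃ S : Set {l : List (Fin 2) // l.length ≤ k - 1},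
        (∀ v ∈ S, (v : {l : List (Fin 2) // l.length ≤ k - 1}).1.length = k - 1) ∧
        S.ncard = n ∧ Propagates (BalancedTree 2 (k - 1)) S}
      = propNum (BalancedTree 2 (k - 1)) := by
  generalize hD : k - 1 = D
  obtain rfl : k = D + 1 := by omega
  obtain ⟨S, hleaf, hcard, hS⟩ := BalancedTree.exists_propagating_leafSet (D := D)
  have hπ : propNum (BalancedTree 2 D) = jacobsthal (D + 1) :=
    IsLeast.csInf_eq ⟨⟨S, hcard, hS⟩, fun _ ⟨_, hn, hS'⟩ =>
      hn ▸ BalancedTree.jacobsthal_le_ncard_of_propagates hS'⟩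
  refine ⟨?_, hπ ▸ IsLeast.csInf_eq ⟨⟨S, hleaf, hcard, hS⟩, fun _ ⟨_, _, hn, hS'⟩ =>
    hn ▸ BalancedTree.jacobsthal_le_ncard_of_propagates hS'⟩⟩
  rw [hπ, three_mul_jacobsthal, pow_succ (-1 : ℤ)]
  ring
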